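/- arXiv:1405.3035 — 2 statements merged into one kernel-verified Lean document; each statement's English description precedes it below -/
import Mathlib

section
/- Let k be a finite field, ψ a nontrivial additive character of k, and χ₁, χ₂, χ₁', χ₂' multiplicative characters of k^× such that χ₁χ₁' and χ₂χ₂' are both nontrivial. Extend multiplicative characters to k by setting χ(0)=0. Then for every x ∈ k^×: Σ_{x₁x₂ = y₁y₂x, x₁,x₂,y₁,y₂ ∈ k^×} ψ(x₁−y₁)χ₁(x₁)χ₁'(y₁)ψ(x₂−y₂)χ₂(x₂)χ₂'(y₂) = G(ψ, χ₁χ₁')·G(ψ, χ₂χ₂') · Σ_{uv=x, u,v ∈ k^×} χ₁(u)·(χ₁χ₁')^{-1}(u−1)·χ₂(v)·(χ₂χ₂')^{-1}(v−1), where G(ψ,χ) = Σ_{y∈k^×} ψ(y)χ(y) and (χ)^{-1}(0) is interpreted as 0. -/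
open scoped BigOperators

open Finset

private lemma sum_units_eq {k : Type*} [Field k] [Fintype k] [DecidableEq k]
    (f : k → ℂ) (hf : f 0 = 0) : ∑ y : kˣ, f (y : k) = ∑ y : k, f y := by
  classical
  have himg : ∑ y ∈ Finset.univ.image (fun u : kˣ => (u : k)), f y = ∑ y : kˣ, f (y : k) :=
    Finset.sum_image (fun a _ b _ h => Units.ext h)
  rw [← himg]
  refine Finset.sum_subset (Finset.subset_univ _) ?_
  intro y _ hy
  rcases eq_or_ne y 0 with rfl | h0
  · exact hf
  · exact absurd (Finset.mem_image.mpr ⟨Units.mk0 y h0, Finset.mem_univ _, rfl⟩) hy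

private lemma key {k : Type*} [Field k] [Fintype k] [DecidableEq k]
    (ψ : AddChar k ℂ) {χ : MulChar k ℂ} (hχ : χ ≠ 1) (a : k) :
    ∑ y : kˣ, ψ ((y : k) * a) * χ (y : k)
      = (∑ y : kˣ, ψ (y : k) * χ (y : k)) * χ a⁻¹ := by
  rcases eq_or_ne a 0 with rfl | ha
  · simp only [mul_zero, AddChar.map_zero_eq_one, one_mul, inv_zero, MulChar.map_zero]
    rw [sum_units_eq (fun y => χ y) (MulChar.map_zero χ), MulChar.sum_eq_zero_of_ne_one hχ]
  · have h : ∑ y : kˣ, ψ ((y : k) * a) * χ (y : k)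
        = ∑ y : kˣ, ψ (y : k) * χ ((y : k) * a⁻¹) := by
      refine Fintype.sum_equiv (Equiv.mulRight (Units.mk0 a ha)) _ _ fun y => ?_
      simp only [Equiv.coe_mulRight, Units.val_mul, Units.val_mk0]
      rw [mul_assoc, mul_inv_cancel₀ ha, mul_one]
    rw [h]
    simp_rw [map_mul χ, ← mul_assoc, ← Finset.sum_mul]


/-- The trace-function identity relating the iterated convolution defining a
hypergeometric sum to a single convolution of Gauss-sum-twisted characters.
Multiplicative characters are extended by `χ(0) = 0`, and `χ⁻¹(z)` is written
as `χ(z⁻¹)` (with `0⁻¹ = 0`, so `χ⁻¹(0) = 0` for nontrivial `χ`). -/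
theorem stmt_3 (k : Type*) [Field k] [Fintype k] [DecidableEq k]
    (ψ : AddChar k ℂ) (hψ : ψ ≠ 1)
    (χ₁ χ₂ χ₁' χ₂' : MulChar k ℂ)
    (h₁ : χ₁ * χ₁' ≠ 1) (h₂ : χ₂ * χ₂' ≠ 1) (x : kˣ) :
    ∑ t ∈ Finset.univ.filter
        (fun t : (kˣ × kˣ) × (kˣ × kˣ) => t.1.1 * t.1.2 = t.2.1 * t.2.2 * x),
      ψ ((t.1.1 : k) - (t.2.1 : k)) * χ₁ (t.1.1 : k) * χ₁' (t.2.1 : k) *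
        ψ ((t.1.2 : k) - (t.2.2 : k)) * χ₂ (t.1.2 : k) * χ₂' (t.2.2 : k)
    = (∑ y : kˣ, ψ (y : k) * (χ₁ * χ₁') (y : k)) *
      (∑ y : kˣ, ψ (y : k) * (χ₂ * χ₂') (y : k)) *
      ∑ p ∈ Finset.univ.filter (fun p : kˣ × kˣ => p.1 * p.2 = x),
        χ₁ (p.1 : k) * (χ₁ * χ₁') (((p.1 : k) - 1)⁻¹) *
          χ₂ (p.2 : k) * (χ₂ * χ₂') (((p.2 : k) - 1)⁻¹) := by
  classical
  set G₁ := ∑ y : kˣ, ψ (y : k) * (χ₁ * χ₁') (y : k) with hG₁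
  set G₂ := ∑ y : kˣ, ψ (y : k) * (χ₂ * χ₂') (y : k) with hG₂
  -- Reindex the RHS sum over the fiber by `u ↦ (u, u⁻¹ * x)`.
  have hR : ∑ p ∈ Finset.univ.filter (fun p : kˣ × kˣ => p.1 * p.2 = x),
        χ₁ (p.1 : k) * (χ₁ * χ₁') (((p.1 : k) - 1)⁻¹) *
          χ₂ (p.2 : k) * (χ₂ * χ₂') (((p.2 : k) - 1)⁻¹)
      = ∑ u : kˣ,
        χ₁ (u : k) * (χ₁ * χ₁') (((u : k) - 1)⁻¹) *
          χ₂ ((u⁻¹ * x : kˣ) : k) * (χ₂ * χ₂') ((((u⁻¹ * x : kˣ) : k) - 1)⁻¹) := by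
    refine Finset.sum_nbij' (fun p => p.1) (fun u => (u, u⁻¹ * x))
      (fun _ _ => Finset.mem_univ _) (fun u _ => ?_) (fun p hp => ?_) (fun u _ => rfl)
      (fun p hp => ?_)
    · simp [Finset.mem_filter]
    · simp only [Finset.mem_filter, Finset.mem_univ, true_and] at hp
      ext <;> simp [← hp]
    · simp only [Finset.mem_filter, Finset.mem_univ, true_and] at hp
      have : p.2 = p.1⁻¹ * x := by rw [← hp]; group
      rw [this]
  -- Reindex the LHS sum over the fiber by `(u, y₁, y₂) ↦ ((u*y₁, u⁻¹*y₂*x), (y₁, y₂))`.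
  have hL : ∑ t ∈ Finset.univ.filter
        (fun t : (kˣ × kˣ) × (kˣ × kˣ) => t.1.1 * t.1.2 = t.2.1 * t.2.2 * x),
      ψ ((t.1.1 : k) - (t.2.1 : k)) * χ₁ (t.1.1 : k) * χ₁' (t.2.1 : k) *
        ψ ((t.1.2 : k) - (t.2.2 : k)) * χ₂ (t.1.2 : k) * χ₂' (t.2.2 : k)
      = ∑ w : kˣ × kˣ × kˣ,
        ψ (((w.1 * w.2.1 : kˣ) : k) - (w.2.1 : k)) * χ₁ ((w.1 * w.2.1 : kˣ) : k) *
          χ₁' (w.2.1 : k) *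
        ψ (((w.1⁻¹ * w.2.2 * x : kˣ) : k) - (w.2.2 : k)) * χ₂ ((w.1⁻¹ * w.2.2 * x : kˣ) : k) *
          χ₂' (w.2.2 : k) := by
    refine Finset.sum_nbij' (fun t => (t.1.1 * t.2.1⁻¹, t.2.1, t.2.2))
      (fun w => ((w.1 * w.2.1, w.1⁻¹ * w.2.2 * x), (w.2.1, w.2.2)))
      (fun _ _ => Finset.mem_univ _) (fun w _ => ?_) (fun t ht => ?_) (fun w _ => ?_)
      (fun t ht => ?_)
    · simp only [Finset.mem_filter, Finset.mem_univ, true_and]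
      rw [mul_comm w.1 w.2.1, mul_assoc, mul_assoc w.1⁻¹, mul_inv_cancel_left, ← mul_assoc]
    · simp only [Finset.mem_filter, Finset.mem_univ, true_and] at ht
      have h2 : t.1.2 = (t.1.1 * t.2.1⁻¹)⁻¹ * t.2.2 * x := by
        have h0 : t.1.2 = t.1.1⁻¹ * (t.2.1 * t.2.2 * x) := by
          rw [← ht, inv_mul_cancel_left]
        rw [h0, mul_inv, inv_inv]
        simp [mul_assoc, mul_comm, mul_left_comm]
      ext
      · simp [mul_assoc]
      · exact congrArg Units.val h2.symm
      · rfl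
      · rfl
    · ext <;> simp [mul_assoc]
    · simp only [Finset.mem_filter, Finset.mem_univ, true_and] at ht
      have h11 : t.1.1 * t.2.1⁻¹ * t.2.1 = t.1.1 := by group
      have h12 : (t.1.1 * t.2.1⁻¹)⁻¹ * t.2.2 * x = t.1.2 := by
        have h0 : t.1.2 = t.1.1⁻¹ * (t.2.1 * t.2.2 * x) := by
          rw [← ht, inv_mul_cancel_left]
        rw [h0, mul_inv, inv_inv]
        simp [mul_assoc, mul_comm, mul_left_comm]
      rw [h11, h12]
  rw [hL, hR, Finset.mul_sum]
  rw [Fintype.sum_prod_type]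
  refine Finset.sum_congr rfl fun u _ => ?_
  rw [Fintype.sum_prod_type]
  -- factor the double sum
  have hterm : ∀ y₁ y₂ : kˣ,
      ψ (((u * y₁ : kˣ) : k) - (y₁ : k)) * χ₁ ((u * y₁ : kˣ) : k) * χ₁' (y₁ : k) *
        ψ (((u⁻¹ * y₂ * x : kˣ) : k) - (y₂ : k)) * χ₂ ((u⁻¹ * y₂ * x : kˣ) : k) *
        χ₂' (y₂ : k)
      = (ψ ((y₁ : k) * ((u : k) - 1)) * (χ₁ * χ₁') (y₁ : k) * χ₁ (u : k)) *
        (ψ ((y₂ : k) * (((u⁻¹ * x : kˣ) : k) - 1)) * (χ₂ * χ₂') (y₂ : k) *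
          χ₂ ((u⁻¹ * x : kˣ) : k)) := by
    intro y₁ y₂
    have e1 : ((u * y₁ : kˣ) : k) - (y₁ : k) = (y₁ : k) * ((u : k) - 1) := by
      push_cast; ring
    have e2 : ((u⁻¹ * y₂ * x : kˣ) : k) - (y₂ : k)
        = (y₂ : k) * (((u⁻¹ * x : kˣ) : k) - 1) := by
      push_cast; ring
    have e3 : ((u⁻¹ * y₂ * x : kˣ) : k) = (y₂ : k) * ((u⁻¹ * x : kˣ) : k) := by
      push_cast; ring
    rw [e1, e2, e3, Units.val_mul, map_mul χ₁, map_mul χ₂, MulChar.mul_apply, MulChar.mul_apply]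
    ring
  simp_rw [hterm]
  rw [← Fintype.sum_mul_sum]
  have k1 : ∑ y₁ : kˣ, ψ ((y₁ : k) * ((u : k) - 1)) * (χ₁ * χ₁') (y₁ : k) * χ₁ (u : k)
      = G₁ * (χ₁ * χ₁') (((u : k) - 1)⁻¹) * χ₁ (u : k) := by
    rw [← Finset.sum_mul, key ψ h₁]
  have k2 : ∑ y₂ : kˣ, ψ ((y₂ : k) * (((u⁻¹ * x : kˣ) : k) - 1)) * (χ₂ * χ₂') (y₂ : k) *
        χ₂ ((u⁻¹ * x : kˣ) : k)
      = G₂ * (χ₂ * χ₂') ((((u⁻¹ * x : kˣ) : k) - 1)⁻¹) * χ₂ ((u⁻¹ * x : kˣ) : k) := by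
    rw [← Finset.sum_mul, key ψ h₂]
  rw [k1, k2]
  ring
end

section
/- Let G be a finite group with a central subgroup C of order 2 such that G/C is abelian, and suppose the commutator pairing (x,y) ↦ [x,y] descends to a nondegenerate bilinear pairing (G/C) × (G/C) → C. Then, up to isomorphism, G has a unique irreducible complex representation on which C acts nontrivially (i.e., the nonidentity element of C acts by −1), and its dimension squared equals the index [G : C]. -/
/-!
Let `c` be the non-trivial element of `C`. Non-degeneracy of the commutator pairing says that
every `g ∉ C` is conjugate to `c * g`, so the character of any representation in which `c` acts
by `-1` satisfies `χ g = -χ g` and hence is supported on `C = {1, c}`. For two such irreducible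
representations of dimensions `d` and `d'` the orthogonality relation then reads
`2 d d' / |G| = [V ≅ V']`: the left side is non-zero, so any two of them are isomorphic, and
taking `V' = V` gives `d² = |G| / 2 = [G : C]`. One such representation exists inside the
`-1`-eigenspace of `c` in the regular representation.
-/

open CategoryTheory
open scoped commutatorElement

universe u

namespace Representation

variable {k G V W : Type*} [Field k] [Group G] [AddCommGroup V] [Module k V]
  [AddCommGroup W] [Module k W]

theorem isIrreducible_iff_forall_invariant [FiniteDimensional k V] (ρ : Representation k G V) :
    ρ.IsIrreducible ↔ 0 < Module.finrank k V ∧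
      ∀ p : Submodule k V, (∀ g : G, ∀ v ∈ p, ρ g v ∈ p) → p = ⊥ ∨ p = ⊤ := by
  rw [Module.finrank_pos_iff]
  constructor
  · intro hρ
    refine ⟨?_, fun p hp => ?_⟩
    · by_contra! hV
      exact bot_ne_top (α := Subrepresentation ρ)
        (Subrepresentation.ext (Subsingleton.elim (α := Submodule k V) ⊥ ⊤))
    · exact (hρ.eq_bot_or_eq_top ⟨p, fun g _ hv => hp g _ hv⟩).imp
        (congrArg Subrepresentation.toSubmodule) (congrArg Subrepresentation.toSubmodule)
  · rintro ⟨hV, hρ⟩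
    refine
      { exists_pair_ne := ⟨⊥, ⊤, fun h => bot_ne_top (congrArg Subrepresentation.toSubmodule h)⟩
        eq_bot_or_eq_top := fun p => ?_ }
    exact (hρ p.toSubmodule fun g _ hv => p.apply_mem_toSubmodule g hv).imp
      Subrepresentation.ext Subrepresentation.ext

theorem IsIrreducible.finrank_pos [FiniteDimensional k V] {ρ : Representation k G V}
    (hρ : ρ.IsIrreducible) : 0 < Module.finrank k V :=
  ((isIrreducible_iff_forall_invariant ρ).mp hρ).1

theorem Subrepresentation.isIrreducible_toRepresentation {ρ : Representation k G V}
    {p : Subrepresentation ρ} (hp : IsAtom p) : p.toRepresentation.IsIrreducible := by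
  let f : Subrepresentation p.toRepresentation → Subrepresentation ρ := fun q =>
    ⟨q.toSubmodule.map p.toSubmodule.subtype, by
      rintro g _ ⟨v, hv, rfl⟩
      exact ⟨_, q.apply_mem_toSubmodule g hv, rfl⟩⟩
  have hf : f.Injective := fun q q' h => Subrepresentation.ext <|
    Submodule.map_injective_of_injective p.toSubmodule.injective_subtype
      (congrArg Subrepresentation.toSubmodule h)
  have hf_bot : f ⊥ = ⊥ := Subrepresentation.ext (Submodule.map_bot _)
  have hf_top : f ⊤ = p := Subrepresentation.ext (Submodule.map_subtype_top _)
  refine { exists_pair_ne := ⟨⊥, ⊤, fun h => hp.1 ?_⟩, eq_bot_or_eq_top := fun q => ?_ }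
  · rw [← hf_top, ← h, hf_bot]
  · have hqp : f q ≤ p := fun v ⟨w, _, hw⟩ => hw ▸ w.2
    refine (hp.le_iff.mp hqp).imp (fun h => hf ?_) (fun h => hf ?_)
    · rw [h, hf_bot]
    · rw [h, hf_top]

theorem exists_isIrreducible_subrepresentation_le [FiniteDimensional k V]
    {ρ : Representation k G V} (p : Subrepresentation ρ) (hp : p ≠ ⊥) :
    ∃ q ≤ p, q.toRepresentation.IsIrreducible := by
  have : WellFoundedLT (Subrepresentation ρ) :=
    (show StrictMono (Subrepresentation.toSubmodule (ρ := ρ)) from fun _ _ h => h).wellFoundedLT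
  have : IsAtomic (Subrepresentation ρ) := isAtomic_of_orderBot_wellFounded_lt wellFounded_lt
  obtain ⟨q, hq, hqp⟩ := (eq_bot_or_exists_atom_le p).resolve_left hp
  exact ⟨q, hqp, Subrepresentation.isIrreducible_toRepresentation hq⟩

def eigenSubrepresentation (ρ : Representation k G V) {c : G} (hc : c ∈ Subgroup.center G)
    (μ : k) : Subrepresentation ρ where
  toSubmodule := Module.End.eigenspace (ρ c) μ
  apply_mem_toSubmodule g v hv := by
    rw [Module.End.mem_eigenspace_iff] at hv ⊢
    rw [← Module.End.mul_apply, ← map_mul, ← Subgroup.mem_center_iff.mp hc g, map_mul,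
      Module.End.mul_apply, hv, map_smul]

theorem toRepresentation_apply_of_le_eigenSubrepresentation {ρ : Representation k G V} {c : G}
    {hc : c ∈ Subgroup.center G} {μ : k} {p : Subrepresentation ρ}
    (hp : p ≤ eigenSubrepresentation ρ hc μ) (v : p.toSubmodule) :
    p.toRepresentation c v = μ • v :=
  Subtype.ext (Module.End.mem_eigenspace_iff.mp (hp v.2))

theorem eigenSubrepresentation_leftRegular_neg_one_ne_bot {c : G}
    (hc : c ∈ Subgroup.center G) (hc1 : c ≠ 1) (hc2 : c⁻¹ = c) :
    eigenSubrepresentation (leftRegular k G) hc (-1) ≠ ⊥ := by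
  intro h
  have hmem : MonoidAlgebra.single 1 (1 : k) - MonoidAlgebra.single c 1 ∈
      eigenSubrepresentation (leftRegular k G) hc (-1) := by
    change _ ∈ Module.End.eigenspace _ _
    rw [Module.End.mem_eigenspace_iff, map_sub, ofMulAction_single, ofMulAction_single,
      smul_eq_mul, smul_eq_mul, mul_one, mul_eq_one_iff_eq_inv.mpr hc2.symm, neg_one_smul, neg_sub]
  rw [h] at hmem
  exact hc1 ((MonoidAlgebra.single_left_inj one_ne_zero).mp (sub_eq_zero.mp hmem)).symm

theorem character_mul_of_eq_neg_one {ρ : Representation k G V} {c : G} (hρ : ρ c = -1)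
    (g : G) : ρ.character (c * g) = -ρ.character g := by
  simp [character, hρ]

theorem character_of_eq_neg_one [FiniteDimensional k V] {ρ : Representation k G V} {c : G}
    (hρ : ρ c = -1) : ρ.character c = -Module.finrank k V := by
  simp [character, hρ]

theorem character_eq_zero_of_conj_eq_mul [CharZero k] {ρ : Representation k G V}
    {c g y : G} (hρ : ρ c = -1) (hconj : y * g * y⁻¹ = c * g) : ρ.character g = 0 := by
  rw [← self_eq_neg, ← character_mul_of_eq_neg_one hρ, ← hconj, char_mul_comm,
    inv_mul_cancel_left]

variable [FiniteDimensional k V] [FiniteDimensional k W] [Fintype G] [CharZero k]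

theorem sum_character_mul_character_inv_of_eq_neg_one {ρ : Representation k G V}
    {σ : Representation k G W} {c : G} (hc1 : c ≠ 1) (hc2 : c⁻¹ = c)
    (hconj : ∀ g, g ≠ 1 → g ≠ c → ∃ y, y * g * y⁻¹ = c * g) (hρ : ρ c = -1) (hσ : σ c = -1) :
    ∑ g, ρ.character g * σ.character g⁻¹ = 2 * Module.finrank k V * Module.finrank k W := by
  rw [Fintype.sum_eq_add 1 c hc1.symm, inv_one, char_one, char_one, hc2,
    character_of_eq_neg_one hρ, character_of_eq_neg_one hσ]
  · ring
  · rintro g ⟨hg1, hgc⟩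
    obtain ⟨y, hy⟩ := hconj g hg1 hgc
    rw [character_eq_zero_of_conj_eq_mul hρ hy, zero_mul]

variable [IsAlgClosed k]

open scoped Classical in
theorem inv_card_mul_two_mul_finrank_mul_finrank_eq_ite {ρ : Representation k G V}
    {σ : Representation k G W} [ρ.IsIrreducible] [σ.IsIrreducible] {c : G} (hc1 : c ≠ 1)
    (hc2 : c⁻¹ = c) (hconj : ∀ g, g ≠ 1 → g ≠ c → ∃ y, y * g * y⁻¹ = c * g)
    (hρ : ρ c = -1) (hσ : σ c = -1) :
    (Nat.card G : k)⁻¹ * (2 * Module.finrank k V * Module.finrank k W) =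
      if Nonempty (σ.Equiv ρ) then 1 else 0 := by
  have : Invertible (Nat.card G : k) := invertibleOfNonzero (by simp)
  rw [← sum_character_mul_character_inv_of_eq_neg_one hc1 hc2 hconj hρ hσ]
  convert char_orthonormal ρ σ

theorem nonempty_equiv_of_eq_neg_one {ρ : Representation k G V}
    {σ : Representation k G W} [hρirr : ρ.IsIrreducible] [hσirr : σ.IsIrreducible] {c : G}
    (hc1 : c ≠ 1) (hc2 : c⁻¹ = c) (hconj : ∀ g, g ≠ 1 → g ≠ c → ∃ y, y * g * y⁻¹ = c * g)
    (hρ : ρ c = -1) (hσ : σ c = -1) : Nonempty (σ.Equiv ρ) := by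
  classical
  by_contra h
  have horth := inv_card_mul_two_mul_finrank_mul_finrank_eq_ite hc1 hc2 hconj hρ hσ
  rw [if_neg h] at horth
  have := hρirr.finrank_pos
  have := hσirr.finrank_pos
  simp only [mul_eq_zero, inv_eq_zero, Nat.cast_eq_zero, OfNat.ofNat_ne_zero, false_or] at horth
  have := Nat.card_pos (α := G)
  omega

theorem two_mul_finrank_mul_self_eq_card {ρ : Representation k G V} [ρ.IsIrreducible] {c : G}
    (hc1 : c ≠ 1) (hc2 : c⁻¹ = c) (hconj : ∀ g, g ≠ 1 → g ≠ c → ∃ y, y * g * y⁻¹ = c * g)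
    (hρ : ρ c = -1) : 2 * Module.finrank k V * Module.finrank k V = Nat.card G := by
  classical
  have := inv_card_mul_two_mul_finrank_mul_finrank_eq_ite hc1 hc2 hconj hρ hρ
  rw [if_pos ⟨Equiv.refl ρ⟩, inv_mul_eq_one₀ (by simp)] at this
  exact_mod_cast this.symm

end Representation

theorem FDRep.nonempty_iso_of_equiv {k G : Type*} [Field k] [Group G] {V W : FDRep k G}
    (e : Representation.Equiv V.ρ W.ρ) : Nonempty (V ≅ W) :=
  ⟨Action.mkIso e.toLinearEquiv.toFGModuleCatIso fun g => by
    ext v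
    exact Representation.IntertwiningMap.isIntertwining _ _ e.toIntertwiningMap g v⟩

theorem FDRep.exists_isIrreducible_ρ_eq_neg_one {k G : Type u} [Field k] [Group G] [Finite G]
    {c : G} (hc : c ∈ Subgroup.center G) (hc1 : c ≠ 1) (hc2 : c⁻¹ = c) :
    ∃ V : FDRep k G, Representation.IsIrreducible V.ρ ∧ V.ρ c = -1 := by
  obtain ⟨p, hp, hirr⟩ := Representation.exists_isIrreducible_subrepresentation_le _
    (Representation.eigenSubrepresentation_leftRegular_neg_one_ne_bot (k := k) hc hc1 hc2)
  refine ⟨FDRep.of p.toRepresentation, hirr, LinearMap.ext fun v => ?_⟩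
  exact (Representation.toRepresentation_apply_of_le_eigenSubrepresentation hp v).trans
    (neg_one_smul k v)

theorem Subgroup.exists_mem_iff_eq_one_or_eq_of_card_eq_two {G : Type*} [Group G]
    {C : Subgroup G} (hC2 : Nat.card C = 2) :
    ∃ c : G, c ≠ 1 ∧ c⁻¹ = c ∧ ∀ x, x ∈ C ↔ x = 1 ∨ x = c := by
  obtain ⟨c, hc1, hc⟩ := (Nat.card_eq_two_iff' (1 : C)).mp hC2
  have hcc : c * c = 1 := by rw [← sq, ← hC2, pow_card_eq_one']
  refine ⟨c, fun h => hc1 (Subtype.ext h), inv_eq_of_mul_eq_one_right ?_, fun x => ⟨?_, ?_⟩⟩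
  · exact congrArg Subtype.val hcc
  · intro hx
    by_cases hx1 : x = 1
    · exact Or.inl hx1
    · exact Or.inr (congrArg Subtype.val (hc ⟨x, hx⟩ fun h => hx1 (congrArg Subtype.val h)))
  · rintro (rfl | rfl)
    exacts [C.one_mem, c.2]

theorem exists_conj_eq_mul_of_commutatorElement_ne_one {G : Type*} [Group G] {C : Subgroup G}
    {c : G} (hCc : ∀ x, x ∈ C ↔ x = 1 ∨ x = c) (hab : ∀ x y : G, ⁅x, y⁆ ∈ C)
    (hnd : ∀ x : G, x ∉ C → ∃ y : G, ⁅x, y⁆ ≠ 1) {g : G} (hg : g ∉ C) :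
    ∃ y, y * g * y⁻¹ = c * g := by
  obtain ⟨y, hy⟩ := hnd g hg
  have hyg : ⁅y, g⁆ ≠ 1 := by rw [← commutatorElement_inv]; exact inv_ne_one.mpr hy
  refine ⟨y, mul_inv_eq_iff_eq_mul.mp ?_⟩
  rw [← commutatorElement_def]
  exact ((hCc _).mp (hab y g)).resolve_left hyg

theorem forall_mem_ne_one_apply_eq_neg_iff {k G V : Type*} [Field k] [Group G] [AddCommGroup V]
    [Module k V] {ρ : Representation k G V} {C : Subgroup G} {c : G}
    (hCc : ∀ x, x ∈ C ↔ x = 1 ∨ x = c) (hc1 : c ≠ 1) :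
    (∀ c' ∈ C, c' ≠ 1 → ∀ v, ρ c' v = -v) ↔ ρ c = -1 := by
  refine ⟨fun h => LinearMap.ext fun v => h c ((hCc c).mpr (Or.inr rfl)) hc1 v, ?_⟩
  rintro h c' hc' hc'1 v
  obtain rfl := ((hCc c').mp hc').resolve_left hc'1
  rw [h, LinearMap.neg_apply, Module.End.one_apply]

/-- Stone–von Neumann type uniqueness: if `G` is finite with a central subgroup
`C` of order 2 such that `G/C` is abelian and the commutator pairing on `G/C`
is nondegenerate, then `G` has a unique irreducible complex representation on
which the nonidentity element of `C` acts by `−1`, and its dimension squared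
equals `[G : C]`. -/
theorem stmt_12 (G : Type) [Group G] [Finite G]
    (C : Subgroup G) (hC : C ≤ Subgroup.center G) (hC2 : Nat.card C = 2)
    (hab : ∀ x y : G, ⁅x, y⁆ ∈ C)
    (hnd : ∀ x : G, x ∉ C → ∃ y : G, ⁅x, y⁆ ≠ 1) :
    ∃ V : FDRep ℂ G,
      (0 < Module.finrank ℂ ↥V ∧
        (∀ W : Submodule ℂ ↥V, (∀ g : G, ∀ v ∈ W, V.ρ g v ∈ W) → W = ⊥ ∨ W = ⊤) ∧
        (∀ c ∈ C, c ≠ 1 → ∀ v : ↥V, V.ρ c v = -v)) ∧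
      Module.finrank ℂ ↥V * Module.finrank ℂ ↥V = C.index ∧
      ∀ V' : FDRep ℂ G,
        (0 < Module.finrank ℂ ↥V' ∧
          (∀ W : Submodule ℂ ↥V', (∀ g : G, ∀ v ∈ W, V'.ρ g v ∈ W) → W = ⊥ ∨ W = ⊤) ∧
          (∀ c ∈ C, c ≠ 1 → ∀ v : ↥V', V'.ρ c v = -v)) →
        Nonempty (V ≅ V') := by
  have := Fintype.ofFinite G
  obtain ⟨c, hc1, hc2, hCc⟩ := Subgroup.exists_mem_iff_eq_one_or_eq_of_card_eq_two hC2
  have hcen : c ∈ Subgroup.center G := hC ((hCc c).mpr (Or.inr rfl))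
  have hconj (g : G) (hg1 : g ≠ 1) (hgc : g ≠ c) : ∃ y, y * g * y⁻¹ = c * g :=
    exists_conj_eq_mul_of_commutatorElement_ne_one hCc hab hnd (by simp [hCc, hg1, hgc])
  obtain ⟨V, hVirr, hVc⟩ := FDRep.exists_isIrreducible_ρ_eq_neg_one (k := ℂ) hcen hc1 hc2
  obtain ⟨hVpos, hVinv⟩ := (Representation.isIrreducible_iff_forall_invariant _).mp hVirr
  refine ⟨V, ⟨hVpos, hVinv, (forall_mem_ne_one_apply_eq_neg_iff hCc hc1).mpr hVc⟩, ?_, ?_⟩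
  · have := Representation.two_mul_finrank_mul_self_eq_card hc1 hc2 hconj hVc
    rw [← C.card_mul_index, hC2] at this
    linarith
  · rintro V' ⟨hV'pos, hV'inv, hV'c⟩
    have : Representation.IsIrreducible V'.ρ :=
      (Representation.isIrreducible_iff_forall_invariant _).mpr ⟨hV'pos, hV'inv⟩
    exact FDRep.nonempty_iso_of_equiv (Representation.nonempty_equiv_of_eq_neg_one hc1 hc2 hconj
      ((forall_mem_ne_one_apply_eq_neg_iff hCc hc1).mp hV'c) hVc).some
end
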